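/- arXiv:1712.10178 — 2 statements merged into one kernel-verified Lean document; each statement's English description precedes it below -/
import Mathlib

section
/- Let F be a field of characteristic 2 with a 2-basis α₁,…,αₙ (n ≥ 2), i.e. F = F²(α₁,…,αₙ) with [F:F²] = 2ⁿ. For each nonzero d = (d₁,…,dₙ) ∈ {0,1}ⁿ set α^d = ∏αᵢ^{dᵢ} and let B_d = ⟨⟨α₁,…,α̂_ℓ,…,αₙ⟩⟩_b ⊗ ⟨⟨1+α^d⟩⟩_b where ℓ is the least index with d_ℓ = 1, and let B₀ = ⟨⟨α₁,…,αₙ⟩⟩_b. Then all 2ⁿ forms B_d are anisotropic and they have no common slot: there is no γ ∈ F× such that ⟨⟨γ⟩⟩_b is a factor of every B_d. -/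
/-- The subfield of squares `F²` of a field of characteristic 2. -/
def sqSubfield (F : Type*) [Field F] [CharP F 2] : Subfield F where
  carrier := {x | ∃ y : F, y ^ 2 = x}
  mul_mem' := by rintro a b ⟨y, rfl⟩ ⟨z, rfl⟩; exact ⟨y * z, by ring⟩
  one_mem' := ⟨1, one_pow 2⟩
  add_mem' := by
    rintro a b ⟨y, rfl⟩ ⟨z, rfl⟩
    exact ⟨y + z, by rw [add_sq]; linear_combination (y*z) * (CharP.cast_eq_zero F 2)⟩
  zero_mem' := ⟨0, by ring⟩
  neg_mem' := by rintro a ⟨y, rfl⟩; exact ⟨y, (CharTwo.neg_eq _).symm⟩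
  inv_mem' := by rintro a ⟨y, rfl⟩; exact ⟨y⁻¹, by rw [inv_pow]⟩

/-- The monomial `β₁^{d₁} ⋯ βₙ^{dₙ}`. -/
def mono {R : Type*} [CommRing R] {n : ℕ} (β : Fin n → R) (d : Fin n → Bool) : R :=
  ∏ i, if d i then β i else 1

/-- The diagonal bilinear `n`-fold Pfister form `⟨⟨β₁,…,βₙ⟩⟩_b`. -/
def bPf (F : Type*) [Field F] {n : ℕ} (β : Fin n → F) (v w : (Fin n → Bool) → F) : F :=
  ∑ d, mono β d * v d * w d

/-- Pure part of the bilinear Pfister form. -/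
def bPfPure (F : Type*) [Field F] {n : ℕ} (β : Fin n → F)
    (v w : {d : Fin n → Bool // d ≠ fun _ => false} → F) : F :=
  ∑ d, mono β d.1 * v d * w d

/-- Anisotropy of a bilinear form. -/
def BAniso (F : Type*) [Field F] {V : Type*} [AddCommGroup V] [Module F V]
    (B : V → V → F) : Prop :=
  ∀ v : V, v ≠ 0 → B v v ≠ 0

/-- Isometry of bilinear forms. -/
def BilinIsom (F : Type*) [Field F] {V W : Type*} [AddCommGroup V] [Module F V]
    [AddCommGroup W] [Module F W] (B₁ : V → V → F) (B₂ : W → W → F) : Prop :=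
  ∃ e : V ≃ₗ[F] W, ∀ v w, B₂ (e v) (e w) = B₁ v w

/-- Isometry of quadratic forms (given as value functions). -/
def QuadIsom (F : Type*) [Field F] {V W : Type*} [AddCommGroup V] [Module F V]
    [AddCommGroup W] [Module F W] (q₁ : V → F) (q₂ : W → F) : Prop :=
  ∃ e : V ≃ₗ[F] W, ∀ v, q₂ (e v) = q₁ v

/-- The quadratic Pfister form `⟨⟨β₁,…,β_m, a]]` as a value function. -/
def qPf (R : Type*) [CommRing R] {m : ℕ} (β : Fin m → R) (a : R)
    (x : (Fin m → Bool) → R × R) : R :=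
  ∑ e, mono β e * ((x e).1 ^ 2 + (x e).1 * (x e).2 + a * (x e).2 ^ 2)

/-- Minimal index where `d` is `true`. -/
noncomputable def minIdx {n : ℕ} (d : Fin n → Bool) (hd : d ≠ fun _ => false) : Fin n :=
  (Finset.univ.filter fun i => d i = true).min' (by
    obtain ⟨i, hi⟩ := Function.ne_iff.mp hd
    exact ⟨i, Finset.mem_filter.mpr ⟨Finset.mem_univ i, by simpa using hi⟩⟩)

/-- Remove the `ℓ`-th entry from a tuple. -/
def removeIdx {R : Type*} {n : ℕ} (α : Fin n → R) (ℓ : Fin n) (i : Fin (n - 1)) : R :=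
  if h : (i : ℕ) < (ℓ : ℕ) then α ⟨i, by omega⟩ else α ⟨(i : ℕ) + 1, by omega⟩

/-- First `n-1` entries of a tuple. -/
def front {R : Type*} {n : ℕ} (α : Fin n → R) (i : Fin (n - 1)) : R :=
  α ⟨i, by omega⟩

/-- Last entry of a tuple (junk value `0` if the tuple is empty). -/
def qlast {R : Type*} [CommRing R] {n : ℕ} (α : Fin n → R) : R :=
  if h : n = 0 then 0 else α ⟨n - 1, by omega⟩

/-- The slot tuple of the form `B_d`: for `d = 0` it is `(α₁,…,αₙ)`; for `d ≠ 0`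
it is `(α₁,…,α̂_ℓ,…,αₙ, 1 + α^d)` (realized by replacing the entry `α_ℓ`, where
`ℓ` is minimal with `d_ℓ = 1`, by `1 + α^d`). -/
noncomputable def slotVec {F : Type*} [Field F] {n : ℕ} (α : Fin n → F)
    (d : Fin n → Bool) : Fin n → F :=
  if h : d = fun _ => false then α
  else Function.update α (minIdx d h) (1 + mono α d)

/-!
Over `K = F²` the monomials `α^f` of a 2-basis form a `K`-basis of `F`, and the diagonal value
`B(v, v) = ∑ v_f² α^f` of `⟨⟨α⟩⟩_b` has the `K`-coordinates `v_f²`; this gives anisotropy, and the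
slot tuple of each `B_d` is again a 2-basis. If `⟨⟨γ⟩⟩_b` is a factor of `B_d`, then `γ = B(y, y)`
with `y` orthogonal to a vector `x` with `B(x, x) = 1`; comparing coordinates forces `x` to be the
constant basis vector, so `γ` has constant coordinate `0` in the monomial basis of `B_d`. For
`d ≠ 0`, the identity `(1 + α^d) α^e = α^e + (α^(d ∧ e))² α^(d ⊕ e)` shows that the `α^0`-coordinate
of any element is its constant coordinate in the basis of `B_d` plus its `α^d`-coordinate; hence
all coordinates of `γ` in the monomial basis of `α` vanish.
-/

open Finset Function

section Monomials

variable {R : Type*} [CommRing R] {n : ℕ}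

@[simp]
lemma mono_false (β : Fin n → R) : mono β (fun _ => false) = 1 := by
  simp [mono]

lemma mono_mul_mono (β : Fin n → R) (e f : Fin n → Bool) :
    mono β e * mono β f = mono β (fun i => e i && f i) ^ 2 * mono β (fun i => e i ^^ f i) := by
  simp only [mono, ← prod_mul_distrib, ← prod_pow]
  refine prod_congr rfl fun i _ => ?_
  by_cases he : e i <;> by_cases hf : f i <;> simp [he, hf, sq]

lemma mono_update (β : Fin n → R) (ℓ : Fin n) (t : R) (f : Fin n → Bool) :
    mono (update β ℓ t) f = (if f ℓ then t else 1) * mono β (update f ℓ false) := by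
  rw [mono, mono, ← mul_prod_erase univ _ (mem_univ ℓ), ← mul_prod_erase univ _ (mem_univ ℓ)]
  simp only [update_self, Bool.false_eq_true, if_false, one_mul]
  congr 1
  refine prod_congr rfl fun i hi => ?_
  rw [update_of_ne (ne_of_mem_erase hi), update_of_ne (ne_of_mem_erase hi)]

lemma mono_single (β : Fin n → R) (i : Fin n) :
    mono β (update (fun _ => false) i true) = β i := by
  simpa [update_idem] using mono_update β i (β i) (update (fun _ => false) i true)

lemma mono_ne_zero [IsDomain R] {β : Fin n → R} (hβ : ∀ i, β i ≠ 0) (f : Fin n → Bool) :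
    mono β f ≠ 0 :=
  prod_ne_zero_iff.mpr fun i _ => by split_ifs <;> simp [hβ i]

end Monomials

section Field

variable {F : Type*} [Field F] {n : ℕ}

lemma bPf_single_single {m : ℕ} (β : Fin m → F) (g h : Fin m → Bool) :
    bPf F β (Pi.single g 1) (Pi.single h 1) = if g = h then mono β g else 0 := by
  by_cases hgh : g = h
  · subst hgh; simp [bPf, Pi.single_apply]
  · simp [bPf, Pi.single_apply, hgh, Ne.symm hgh]

lemma apply_minIdx {d : Fin n → Bool} (hd : d ≠ fun _ => false) :
    d (minIdx d hd) = true :=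
  (mem_filter.mp (min'_mem (univ.filter fun i => d i = true) _)).2

lemma slotVec_zero (α : Fin n → F) : slotVec α (fun _ => false) = α :=
  dif_pos rfl

lemma slotVec_of_ne (α : Fin n → F) {d : Fin n → Bool} (hd : d ≠ fun _ => false) :
    slotVec α d = update α (minIdx d hd) (1 + mono α d) :=
  dif_neg hd

end Field

section CharTwo

variable {F : Type*} [Field F] [CharP F 2] {n : ℕ}

def toSqSubfield (z : F) : sqSubfield F := ⟨z ^ 2, z, rfl⟩

@[simp]
lemma coe_toSqSubfield (z : F) : (toSqSubfield z : F) = z ^ 2 := rfl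

@[simp]
lemma toSqSubfield_one : toSqSubfield (1 : F) = 1 := Subtype.ext (one_pow 2)

lemma bPf_self_eq_sum_smul (β : Fin n → F) (v : (Fin n → Bool) → F) :
    bPf F β v v = ∑ f, toSqSubfield (v f) • mono β f :=
  sum_congr rfl fun f _ => by rw [Subfield.smul_def, coe_toSqSubfield, smul_eq_mul]; ring

structure IsTwoBasis (α : Fin n → F) : Prop where
  adjoin_eq_top : IntermediateField.adjoin (sqSubfield F) (Set.range α) = ⊤
  finrank_eq : Module.finrank (sqSubfield F) F = 2 ^ n

namespace IsTwoBasis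

variable {α : Fin n → F} (hα : IsTwoBasis α)
include hα

lemma span_mono_eq_top : Submodule.span (sqSubfield F) (Set.range (mono α)) = ⊤ := by
  have : Module.Finite (sqSubfield F) F :=
    Module.finite_of_finrank_pos (by rw [hα.finrank_eq]; positivity)
  set M := Submodule.span (sqSubfield F) (Set.range (mono α))
  have one_mem : (1 : F) ∈ M := mono_false α ▸ Submodule.subset_span ⟨_, rfl⟩
  have mul_mem : ∀ x y, x ∈ M → y ∈ M → x * y ∈ M := by
    have : M * M ≤ M := by
      rw [Submodule.span_mul_span, Submodule.span_le]
      rintro _ ⟨_, ⟨e, rfl⟩, _, ⟨f, rfl⟩, rfl⟩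
      change mono α e * mono α f ∈ M
      rw [mono_mul_mono, ← coe_toSqSubfield, ← smul_eq_mul, ← Subfield.smul_def]
      exact M.smul_mem _ (Submodule.subset_span ⟨_, rfl⟩)
    exact fun x y hx hy => this (Submodule.mul_mem_mul hx hy)
  have hle : Algebra.adjoin (sqSubfield F) (Set.range α) ≤ M.toSubalgebra one_mem mul_mem :=
    Algebra.adjoin_le <| by
      rintro _ ⟨i, rfl⟩
      exact mono_single α i ▸ Submodule.subset_span ⟨_, rfl⟩
  rw [← IntermediateField.adjoin_toSubalgebra, hα.adjoin_eq_top,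
    IntermediateField.top_toSubalgebra] at hle
  exact eq_top_iff.mpr fun x _ => hle Algebra.mem_top

noncomputable def basis : Module.Basis (Fin n → Bool) (sqSubfield F) F :=
  basisOfTopLeSpanOfCardEqFinrank (mono α) hα.span_mono_eq_top.ge (by simp [hα.finrank_eq])

@[simp]
lemma coe_basis : ⇑hα.basis = mono α :=
  coe_basisOfTopLeSpanOfCardEqFinrank _ _ _

@[simp]
lemma repr_mono (f : Fin n → Bool) : hα.basis.repr (mono α f) = Finsupp.single f 1 := by
  rw [← hα.coe_basis, Module.Basis.repr_self]

lemma repr_bPf_self (v : (Fin n → Bool) → F) (f : Fin n → Bool) :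
    (hα.basis.repr (bPf F α v v) f : F) = v f ^ 2 := by
  rw [bPf_self_eq_sum_smul, ← hα.coe_basis, Module.Basis.repr_sum_self, coe_toSqSubfield]

lemma ne_zero (i : Fin n) : α i ≠ 0 := by
  simpa [mono_single] using hα.basis.ne_zero (update (fun _ => false) i true)

lemma bAniso_bPf : BAniso F (bPf F α) := by
  intro v hv hvv
  refine hv (funext fun f => pow_eq_zero_iff two_ne_zero |>.mp ?_)
  rw [← hα.repr_bPf_self, hvv, map_zero, Finsupp.zero_apply, ZeroMemClass.coe_zero]

lemma repr_zero_eq_zero_of_bilinIsom {m : ℕ} {γ : F} {ψ : Fin m → F}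
    (h : BilinIsom F (bPf F α) (bPf F (Fin.cons γ ψ))) :
    hα.basis.repr γ (fun _ => false) = 0 := by
  obtain ⟨e, he⟩ := h
  have hB : ∀ g h, bPf F α (e.symm (Pi.single g 1)) (e.symm (Pi.single h 1))
      = if g = h then mono (Fin.cons γ ψ) g else 0 := fun g h => by
    rw [← he, e.apply_symm_apply, e.apply_symm_apply, bPf_single_single]
  set x := e.symm (Pi.single (fun _ => false) 1)
  set y := e.symm (Pi.single (update (fun _ => false) 0 true) 1)
  have hx : ∀ f, x f ^ 2 = if f = fun _ => false then 1 else 0 := fun f => by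
    rw [← hα.repr_bPf_self, hB, if_pos rfl, mono_false, ← mono_false α, repr_mono]
    rcases eq_or_ne f (fun _ => false) with rfl | hf
    · simp
    · simp [hf]
  have hx0 : x (fun _ => false) ≠ 0 := fun h0 => by simpa [h0] using hx (fun _ => false)
  have hxy : bPf F α x y = x (fun _ => false) * y (fun _ => false) := by
    rw [bPf, sum_eq_single (fun _ => false)]
    · simp
    · intro f _ hf
      simp [pow_eq_zero_iff two_ne_zero |>.mp ((hx f).trans (if_neg hf))]
    · simp
  have hy0 : y (fun _ => false) = 0 := by
    rw [hB, if_neg (fun h => by simpa using congrFun h 0)] at hxy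
    exact (mul_eq_zero.mp hxy.symm).resolve_left hx0
  have hyy : bPf F α y y = γ := by rw [hB, if_pos rfl, mono_single, Fin.cons_zero]
  rw [← hyy]
  exact Subtype.ext (by rw [hα.repr_bPf_self, hy0]; simp)

lemma update_one_add_mono {d : Fin n → Bool} {ℓ : Fin n} (hdℓ : d ℓ = true) :
    IsTwoBasis (update α ℓ (1 + mono α d)) := by
  refine ⟨?_, hα.finrank_eq⟩
  set β := update α ℓ (1 + mono α d)
  set L := IntermediateField.adjoin (sqSubfield F) (Set.range β)
  have hβL : ∀ i, β i ∈ L := fun i => IntermediateField.subset_adjoin _ _ ⟨i, rfl⟩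
  set d' := update d ℓ false
  have hd' : mono β d' ∈ L := prod_mem fun i _ => by
    split_ifs
    exacts [hβL i, one_mem L]
  have hmono_d' : mono β d' = mono α d' := by simp [β, d', mono_update]
  have hmono_d : mono α d = α ℓ * mono α d' := by simpa [hdℓ] using mono_update α ℓ (α ℓ) d
  have hαℓ : α ℓ = (β ℓ - 1) / mono β d' := by
    rw [hmono_d', show β ℓ = 1 + mono α d from update_self .., add_sub_cancel_left, hmono_d,
      mul_div_cancel_right₀ _ (mono_ne_zero hα.ne_zero d')]
  rw [eq_top_iff, ← hα.adjoin_eq_top, IntermediateField.adjoin_le_iff]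
  rintro _ ⟨i, rfl⟩
  rcases eq_or_ne i ℓ with rfl | hi
  · rw [hαℓ]
    exact div_mem (sub_mem (hβL i) (one_mem L)) hd'
  · simpa [β, update_of_ne hi] using hβL i

lemma isTwoBasis_slotVec (d : Fin n → Bool) : IsTwoBasis (slotVec α d) := by
  by_cases hd : d = fun _ => false
  · rwa [hd, slotVec_zero]
  · rw [slotVec_of_ne α hd]
    exact hα.update_one_add_mono (apply_minIdx hd)

lemma repr_zero_eq_repr_zero_update_add_repr {d : Fin n → Bool} {ℓ : Fin n} (hdℓ : d ℓ = true)
    (x : F) :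
    hα.basis.repr x (fun _ => false)
      = (hα.update_one_add_mono hdℓ).basis.repr x (fun _ => false) + hα.basis.repr x d := by
  suffices hα.basis.coord (fun _ => false)
      = (hα.update_one_add_mono hdℓ).basis.coord (fun _ => false) + hα.basis.coord d from
    congr($this x)
  refine (hα.update_one_add_mono hdℓ).basis.ext fun f => ?_
  rw [LinearMap.add_apply, Module.Basis.coord_apply, Module.Basis.coord_apply,
    Module.Basis.coord_apply, Module.Basis.repr_self, coe_basis, mono_update]
  have hd0 : d ≠ fun _ => false := fun h => by simp [h] at hdℓ
  set f' := update f ℓ false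
  have hf'd : f' ≠ d := fun h => by simpa [f', hdℓ] using congrFun h ℓ
  by_cases hf : f ℓ
  · have hf0 : f ≠ fun _ => false := fun h => by simp [h] at hf
    rw [if_pos hf, add_mul, one_mul, mono_mul_mono, ← coe_toSqSubfield, ← smul_eq_mul,
      ← Subfield.smul_def, map_add, map_smul, repr_mono, repr_mono]
    rcases eq_or_ne f' (fun _ => false) with h0 | h0
    · have hxor : (fun i => d i ^^ f' i) = d := funext fun i => by simp [h0]
      have hand : (fun i => d i && f' i) = fun _ => false := funext fun i => by simp [h0]
      rw [hxor, hand, h0]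
      simp [hf0, hd0, Ne.symm hd0]
    · have hxor0 : (fun i => d i ^^ f' i) ≠ fun _ => false := fun h => by
        simpa [f', hdℓ] using congrFun h ℓ
      have hxord : (fun i => d i ^^ f' i) ≠ d := fun h => h0 (funext fun i =>
        Bool.xor_right_inj.mp ((congrFun h i).trans (Bool.xor_false _).symm))
      simp [h0, hf0, hxor0, hxord, hf'd]
  · have hfd : f ≠ d := fun h => hf (h ▸ hdℓ)
    rw [if_neg hf, one_mul, show f' = f from update_eq_self_iff.mpr (by simpa using hf),
      repr_mono]
    simp [hfd, Finsupp.single_apply]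

end IsTwoBasis

end CharTwo

theorem stmt_5_general (F : Type*) [Field F] [CharP F 2] (n : ℕ)
    (α : Fin n → F)
    (hadj : IntermediateField.adjoin (sqSubfield F) (Set.range α) = ⊤)
    (hrk : Module.finrank (sqSubfield F) F = 2 ^ n) :
    (∀ d : Fin n → Bool, BAniso F (bPf F (slotVec α d))) ∧
    ¬ ∃ γ : F, γ ≠ 0 ∧ ∀ d : Fin n → Bool,
        ∃ ψ : Fin (n - 1) → F, (∀ i, ψ i ≠ 0) ∧
          BilinIsom F (bPf F (slotVec α d)) (bPf F (Fin.cons γ ψ)) := by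
  have hα : IsTwoBasis α := ⟨hadj, hrk⟩
  refine ⟨fun d => (hα.isTwoBasis_slotVec d).bAniso_bPf, ?_⟩
  rintro ⟨γ, hγ, hslot⟩
  have hγ0 : hα.basis.repr γ (fun _ => false) = 0 := by
    obtain ⟨ψ, -, hiso⟩ := hslot fun _ => false
    rw [slotVec_zero] at hiso
    exact hα.repr_zero_eq_zero_of_bilinIsom hiso
  refine hγ (hα.basis.forall_coord_eq_zero_iff.mp fun d => ?_)
  rw [Module.Basis.coord_apply]
  by_cases hd : d = fun _ => false
  · rwa [hd]
  · obtain ⟨ψ, -, hiso⟩ := hslot d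
    rw [slotVec_of_ne α hd] at hiso
    have hγ0' := (hα.update_one_add_mono (apply_minIdx hd)).repr_zero_eq_zero_of_bilinIsom hiso
    have := hα.repr_zero_eq_repr_zero_update_add_repr (apply_minIdx hd) γ
    rwa [hγ0, hγ0', zero_add, eq_comm] at this

/-- the `2ⁿ` anisotropic bilinear `n`-fold Pfister forms `B_d` built
from a 2-basis `α₁,…,αₙ` have no common slot. -/
theorem stmt_5 (F : Type*) [Field F] [CharP F 2] (n : ℕ) (hn : 2 ≤ n)
    (α : Fin n → F)
    (hadj : IntermediateField.adjoin (sqSubfield F) (Set.range α) = ⊤)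
    (hrk : Module.finrank (sqSubfield F) F = 2 ^ n) :
    (∀ d : Fin n → Bool, BAniso F (bPf F (slotVec α d))) ∧
    ¬ ∃ γ : F, γ ≠ 0 ∧ ∀ d : Fin n → Bool,
        ∃ ψ : Fin (n - 1) → F, (∀ i, ψ i ≠ 0) ∧
          BilinIsom F (bPf F (slotVec α d)) (bPf F (Fin.cons γ ψ)) :=
  stmt_5_general F n α hadj hrk
end

section
/- With the hypotheses of the previous statement, suppose additionally that v̄(D(φ)) = Γ/2Γ. Then the image under v̄ of the nonzero values of the pure part φ' is Γ/2Γ ∖ {v̄(αₙ)}, where v̄(αₙ) is identified with the class of v(α₁^{d₁}⋯αₙ^{dₙ}) for d = (0,…,0,1). -/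
open Finset

structure IsAddValuationOnNonzero {F Γ : Type*} [Field F] [AddCommGroup Γ] [LinearOrder Γ]
    (v : F → Γ) : Prop where
  map_mul : ∀ x y : F, x ≠ 0 → y ≠ 0 → v (x * y) = v x + v y
  min_le_map_add : ∀ x y : F, x ≠ 0 → y ≠ 0 → x + y ≠ 0 → min (v x) (v y) ≤ v (x + y)

namespace IsAddValuationOnNonzero

variable {F Γ : Type*} [Field F] [AddCommGroup Γ] [LinearOrder Γ] {v : F → Γ}

theorem map_one (hv : IsAddValuationOnNonzero v) : v 1 = 0 := by
  have h := hv.map_mul 1 1 one_ne_zero one_ne_zero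
  rwa [mul_one, left_eq_add] at h

theorem map_sq (hv : IsAddValuationOnNonzero v) {x : F} (hx : x ≠ 0) : v (x ^ 2) = 2 • v x := by
  rw [sq, hv.map_mul x x hx hx, two_nsmul]

theorem map_prod (hv : IsAddValuationOnNonzero v) {ι : Type*} (s : Finset ι) (f : ι → F)
    (hf : ∀ i ∈ s, f i ≠ 0) : v (∏ i ∈ s, f i) = ∑ i ∈ s, v (f i) := by
  classical
  induction s using Finset.induction_on with
  | empty => simpa using hv.map_one
  | insert a t ha ih =>
    have hft : ∀ i ∈ t, f i ≠ 0 := fun i hi => hf i (mem_insert_of_mem hi)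
    rw [prod_insert ha, sum_insert ha, hv.map_mul _ _ (hf a (mem_insert_self a t))
      (prod_ne_zero_iff.mpr hft), ih hft]

variable [IsOrderedAddMonoid Γ]

theorem map_neg (hv : IsAddValuationOnNonzero v) (x : F) : v (-x) = v x := by
  rcases eq_or_ne x 0 with rfl | hx
  · rw [neg_zero]
  have hm1 : (-1 : F) ≠ 0 := neg_ne_zero.mpr one_ne_zero
  have h := hv.map_mul (-1) (-1) hm1 hm1
  rw [neg_one_mul, neg_neg, hv.map_one, ← two_nsmul] at h
  rw [neg_eq_neg_one_mul, hv.map_mul _ _ hm1 hx, two_nsmul_eq_zero.mp h.symm, zero_add]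

theorem map_add_eq_of_lt (hv : IsAddValuationOnNonzero v) {x y : F} (hx : x ≠ 0) (hy : y ≠ 0)
    (h : v x < v y) : x + y ≠ 0 ∧ v (x + y) = v x := by
  have hxy : x + y ≠ 0 := by
    intro h0
    rw [eq_neg_of_add_eq_zero_right h0, hv.map_neg] at h
    exact h.false
  refine ⟨hxy, le_antisymm ?_ ?_⟩
  · have h' := hv.min_le_map_add (x + y) (-y) hxy (neg_ne_zero.mpr hy) (by simpa using hx)
    rw [add_neg_cancel_right, hv.map_neg] at h'
    exact (min_le_iff.mp h').resolve_right h.not_ge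
  · simpa [min_eq_left h.le] using hv.min_le_map_add x y hx hy hxy

theorem map_add_add_eq_of_lt (hv : IsAddValuationOnNonzero v) {z x y : F} (hz : z ≠ 0)
    (hx : x ≠ 0) (hy : y ≠ 0) (hzx : v z < v x) (hzy : v z < v y) :
    z + x + y ≠ 0 ∧ v (z + x + y) = v z := by
  rw [add_assoc]
  by_cases hxy : x + y = 0
  · rw [hxy, add_zero]
    exact ⟨hz, rfl⟩
  · exact hv.map_add_eq_of_lt hz hxy ((lt_min hzx hzy).trans_le (hv.min_le_map_add x y hx hy hxy))

theorem exists_map_sum_eq (hv : IsAddValuationOnNonzero v) {ι : Type*} (s : Finset ι)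
    (f : ι → F) (hf : ∀ i ∈ s, ∀ j ∈ s, f i ≠ 0 → f j ≠ 0 → v (f i) = v (f j) → i = j)
    (hs : ∑ i ∈ s, f i ≠ 0) : ∃ i ∈ s, f i ≠ 0 ∧ v (∑ i ∈ s, f i) = v (f i) := by
  classical
  induction s using Finset.induction_on with
  | empty => simp at hs
  | insert a t ha ih =>
    rw [sum_insert ha] at hs ⊢
    by_cases ht : ∑ i ∈ t, f i = 0
    · rw [ht, add_zero] at hs ⊢
      exact ⟨a, mem_insert_self a t, hs, rfl⟩
    obtain ⟨i, hi, hfi, hvi⟩ :=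
      ih (fun i hi j hj => hf i (mem_insert_of_mem hi) j (mem_insert_of_mem hj)) ht
    by_cases hfa : f a = 0
    · rw [hfa, zero_add]
      exact ⟨i, mem_insert_of_mem hi, hfi, hvi⟩
    have hne : v (f a) ≠ v (∑ i ∈ t, f i) := fun h =>
      ha (hf a (mem_insert_self a t) i (mem_insert_of_mem hi) hfa hfi (h.trans hvi) ▸ hi)
    rcases hne.lt_or_gt with hlt | hgt
    · exact ⟨a, mem_insert_self a t, hfa, (hv.map_add_eq_of_lt hfa ht hlt).2⟩
    · rw [add_comm]
      exact ⟨i, mem_insert_of_mem hi, hfi, (hv.map_add_eq_of_lt ht hfa hgt).2.trans hvi⟩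

end IsAddValuationOnNonzero

section NormForm

variable {R : Type*} [CommRing R]

-- The binary quadratic form `[1, a]`.
def normForm (a : R) (p : R × R) : R :=
  p.1 ^ 2 + p.1 * p.2 + a * p.2 ^ 2

@[simp]
theorem normForm_zero (a : R) : normForm a 0 = 0 := by
  simp [normForm]

theorem normForm_mk_zero (a s : R) : normForm a (s, 0) = s ^ 2 := by
  simp [normForm]

theorem normForm_zero_mk (a t : R) : normForm a (0, t) = a * t ^ 2 := by
  simp [normForm]

theorem qPf_single {m : ℕ} (β : Fin m → R) (a : R) (e : Fin m → Bool) (p : R × R) :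
    qPf R β a (Pi.single e p) = mono β e * normForm a p := by
  refine (sum_eq_single e (fun e' _ he' => ?_) (by simp)).trans ?_
  · simp [he']
  · simp [normForm]

end NormForm

theorem mono_ne_zero_s12 {F : Type*} [Field F] {m : ℕ} {β : Fin m → F} (hβ : ∀ i, β i ≠ 0)
    (e : Fin m → Bool) : mono β e ≠ 0 :=
  prod_ne_zero_iff.mpr fun i _ => by split <;> simp [hβ i]

section BitSum

variable {ι Γ : Type*} [Fintype ι] [AddCommGroup Γ]

def bitSum (g : ι → Γ) (c : ι → Bool) : Γ :=
  ∑ i, if c i then g i else 0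

def IndepModTwo (g : ι → Γ) : Prop :=
  ∀ c : ι → Bool, (∃ i, c i = true) → ∀ h : Γ, bitSum g c ≠ 2 • h

theorem bitSum_add_bitSum (g : ι → Γ) (c c' : ι → Bool) :
    bitSum g c + bitSum g c' =
      bitSum g (fun i => xor (c i) (c' i)) + 2 • bitSum g (fun i => c i && c' i) := by
  simp only [bitSum, ← sum_add_distrib, smul_sum]
  refine sum_congr rfl fun i _ => ?_
  by_cases hc : c i <;> by_cases hc' : c' i <;> simp [hc, hc', two_nsmul]

@[simp]
theorem bitSum_false (g : ι → Γ) : bitSum g (fun _ => false) = 0 := by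
  simp [bitSum]

theorem bitSum_snoc {m : ℕ} (g : Fin (m + 1) → Γ) (c : Fin m → Bool) (b : Bool) :
    bitSum g (Fin.snoc c b : Fin (m + 1) → Bool) =
      bitSum (Fin.init g) c + if b then g (Fin.last m) else 0 := by
  simp only [bitSum, Fin.sum_univ_castSucc, Fin.snoc_castSucc, Fin.snoc_last, Fin.init]

namespace IndepModTwo

variable {g : ι → Γ} (hg : IndepModTwo g)
include hg

theorem apply_ne_two_nsmul (i : ι) (h : Γ) : g i ≠ 2 • h := by
  classical
  simpa [bitSum] using hg (fun j => decide (j = i)) ⟨i, by simp⟩ h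

theorem bitSum_add_two_nsmul_ne {c c' : ι → Bool} (hc : c ≠ c') (h h' : Γ) :
    bitSum g c + 2 • h ≠ bitSum g c' + 2 • h' := by
  intro heq
  obtain ⟨i, hi⟩ := Function.ne_iff.mp hc
  refine hg (fun i => xor (c i) (c' i)) ⟨i, by simpa using hi⟩
    (bitSum g c' + h' - h - bitSum g fun i => c i && c' i) ?_
  rw [eq_sub_of_add_eq (bitSum_add_bitSum g c c').symm, eq_sub_of_add_eq heq]
  simp only [smul_sub, smul_add]
  abel

end IndepModTwo

end BitSum

namespace IsAddValuationOnNonzero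

variable {F Γ : Type*} [Field F] [AddCommGroup Γ] [LinearOrder Γ] {v : F → Γ} {m : ℕ}
  {α : Fin (m + 1) → F}

theorem map_mono (hv : IsAddValuationOnNonzero v) {β : Fin m → F} (hβ : ∀ i, β i ≠ 0)
    (e : Fin m → Bool) : v (mono β e) = bitSum (fun i => v (β i)) e := by
  rw [mono, hv.map_prod _ _ fun i _ => by split <;> simp [hβ i]]
  refine sum_congr rfl fun i _ => ?_
  split <;> simp [hv.map_one]

theorem map_mono_init_mul_sq (hv : IsAddValuationOnNonzero v)
    (hα : ∀ i, α i ≠ 0) (e : Fin m → Bool) {s : F} (hs : s ≠ 0) :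
    v (mono (Fin.init α) e * s ^ 2) =
      bitSum (fun i => v (α i)) (Fin.snoc e false) + 2 • v s := by
  have hβ : ∀ i, Fin.init α i ≠ 0 := fun i => hα _
  rw [hv.map_mul _ _ (mono_ne_zero_s12 hβ e) (pow_ne_zero 2 hs),
    hv.map_mono hβ, hv.map_sq hs, bitSum_snoc, if_neg Bool.false_ne_true, add_zero]
  rfl

theorem map_mono_init_mul_last_mul_sq (hv : IsAddValuationOnNonzero v)
    (hα : ∀ i, α i ≠ 0) (e : Fin m → Bool) {t : F} (ht : t ≠ 0) :
    v (mono (Fin.init α) e * (α (Fin.last m) * t ^ 2)) =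
      bitSum (fun i => v (α i)) (Fin.snoc e true) + 2 • v t := by
  have hβ : ∀ i, Fin.init α i ≠ 0 := fun i => hα _
  rw [hv.map_mul _ _ (mono_ne_zero_s12 hβ e) (mul_ne_zero (hα _) (pow_ne_zero 2 ht)),
    hv.map_mul _ _ (hα _) (pow_ne_zero 2 ht), hv.map_mono hβ, hv.map_sq ht,
    bitSum_snoc, if_pos rfl, add_assoc]
  rfl

variable [IsOrderedAddMonoid Γ]

theorem normForm_ne_zero_and_map (hv : IsAddValuationOnNonzero v) {a : F} (ha : a ≠ 0)
    (hva : v a < 0) (hodd : ∀ h : Γ, v a ≠ 2 • h) {p : F × F} (hp : p ≠ 0) :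
    normForm a p ≠ 0 ∧
      ((p.1 ≠ 0 ∧ v (normForm a p) = v (p.1 ^ 2)) ∨
        (p.2 ≠ 0 ∧ v (normForm a p) = v (a * p.2 ^ 2))) := by
  obtain ⟨s, t⟩ := p
  by_cases ht : t = 0
  · have hs : s ≠ 0 := fun hs => hp (by rw [hs, ht]; rfl)
    rw [ht, normForm_mk_zero]
    exact ⟨pow_ne_zero 2 hs, Or.inl ⟨hs, rfl⟩⟩
  by_cases hs : s = 0
  · rw [hs, normForm_zero_mk]
    exact ⟨mul_ne_zero ha (pow_ne_zero 2 ht), Or.inr ⟨ht, rfl⟩⟩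
  have hs2 : v (s ^ 2) = 2 • v s := hv.map_sq hs
  have ht2 : v (a * t ^ 2) = v a + 2 • v t := by
    rw [hv.map_mul _ _ ha (pow_ne_zero 2 ht), hv.map_sq ht]
  have hst : v (s * t) = v s + v t := hv.map_mul s t hs ht
  have hne : 2 • v s ≠ v a + 2 • v t := fun h => hodd (v s - v t) (by rw [smul_sub, h]; abel)
  -- `2 v(st) = v(s²) + v(t²) > v(s²) + v(at²)`: `st` lies strictly above the smaller diagonal term
  rcases hne.lt_or_gt with hlt | hgt
  · have hvst : v s < v t :=
      lt_of_nsmul_lt_nsmul_right 2 (hlt.trans (add_lt_of_neg_left _ hva))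
    obtain ⟨h0, hval⟩ := hv.map_add_add_eq_of_lt (pow_ne_zero 2 hs) (mul_ne_zero hs ht)
      (mul_ne_zero ha (pow_ne_zero 2 ht)) (by rw [hs2, hst, two_nsmul]; gcongr)
      (by rw [hs2, ht2]; exact hlt)
    exact ⟨h0, Or.inl ⟨hs, hval⟩⟩
  · have hvst : v a + v t < v s := lt_of_nsmul_lt_nsmul_right 2 <| by
      rw [nsmul_add, two_nsmul (v a), add_assoc]
      exact (add_lt_of_neg_left _ hva).trans hgt
    obtain ⟨h0, hval⟩ := hv.map_add_add_eq_of_lt (mul_ne_zero ha (pow_ne_zero 2 ht))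
      (mul_ne_zero hs ht) (pow_ne_zero 2 hs)
      (by rw [ht2, hst, two_nsmul, ← add_assoc]; gcongr) (by rw [ht2, hs2]; exact hgt)
    have hperm : normForm a (s, t) = a * t ^ 2 + s * t + s ^ 2 := by
      rw [normForm]; ring
    rw [hperm]
    exact ⟨h0, Or.inr ⟨ht, hval⟩⟩

theorem map_mono_mul_normForm (hv : IsAddValuationOnNonzero v) {β : Fin m → F}
    (hβ : ∀ i, β i ≠ 0) {a : F} (ha : a ≠ 0) (hva : v a < 0) (hodd : ∀ h : Γ, v a ≠ 2 • h)
    (e : Fin m → Bool) {p : F × F} (hp : p ≠ 0) :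
    mono β e * normForm a p ≠ 0 ∧
      ((p.1 ≠ 0 ∧ v (mono β e * normForm a p) = v (mono β e * p.1 ^ 2)) ∨
        (p.2 ≠ 0 ∧ v (mono β e * normForm a p) = v (mono β e * (a * p.2 ^ 2)))) := by
  have hm := mono_ne_zero_s12 hβ e
  obtain ⟨hN, ⟨hs, hval⟩ | ⟨ht, hval⟩⟩ := hv.normForm_ne_zero_and_map ha hva hodd hp
  · refine ⟨mul_ne_zero hm hN, Or.inl ⟨hs, ?_⟩⟩
    rw [hv.map_mul _ _ hm hN, hval, hv.map_mul _ _ hm (pow_ne_zero 2 hs)]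
  · refine ⟨mul_ne_zero hm hN, Or.inr ⟨ht, ?_⟩⟩
    rw [hv.map_mul _ _ hm hN, hval, hv.map_mul _ _ hm (mul_ne_zero ha (pow_ne_zero 2 ht))]

theorem exists_map_qPf_eq (hv : IsAddValuationOnNonzero v) (hα : ∀ i, α i ≠ 0)
    (hlast : v (α (Fin.last m)) < 0) (hind : IndepModTwo fun i => v (α i))
    (x : (Fin m → Bool) → F × F) (hx : qPf F (Fin.init α) (α (Fin.last m)) x ≠ 0) :
    ∃ e, ((x e).1 ≠ 0 ∧
        v (qPf F (Fin.init α) (α (Fin.last m)) x) = v (mono (Fin.init α) e * (x e).1 ^ 2)) ∨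
      ((x e).2 ≠ 0 ∧ v (qPf F (Fin.init α) (α (Fin.last m)) x) =
        v (mono (Fin.init α) e * (α (Fin.last m) * (x e).2 ^ 2))) := by
  set f := fun e => mono (Fin.init α) e * normForm (α (Fin.last m)) (x e)
  have hβ : ∀ i, Fin.init α i ≠ 0 := fun i => hα _
  have hterm (e) (hp : x e ≠ 0) := hv.map_mono_mul_normForm hβ (hα (Fin.last m)) hlast
    (hind.apply_ne_two_nsmul _) e hp
  have hp (e) (he : f e ≠ 0) : x e ≠ 0 := fun h0 => he (by simp [f, h0])
  have hclass (e) (he : f e ≠ 0) :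
      ∃ b y, v (f e) = bitSum (fun i => v (α i)) (Fin.snoc e b) + 2 • y := by
    obtain ⟨-, ⟨hs, hval⟩ | ⟨ht, hval⟩⟩ := hterm e (hp e he)
    exacts [⟨false, _, hval.trans (hv.map_mono_init_mul_sq hα e hs)⟩,
      ⟨true, _, hval.trans (hv.map_mono_init_mul_last_mul_sq hα e ht)⟩]
  have hinj : ∀ e ∈ univ, ∀ e' ∈ univ, f e ≠ 0 → f e' ≠ 0 → v (f e) = v (f e') → e = e' := by
    intro e _ e' _ he he' heq
    obtain ⟨b, y, hy⟩ := hclass e he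
    obtain ⟨b', y', hy'⟩ := hclass e' he'
    by_contra hne
    exact hind.bitSum_add_two_nsmul_ne (fun h => hne (Fin.snoc_injective2 h).1) y y'
      (hy.symm.trans (heq.trans hy'))
  obtain ⟨e, -, he, hval⟩ := hv.exists_map_sum_eq univ f hinj hx
  obtain ⟨-, h | h⟩ := hterm e (hp e he)
  exacts [⟨e, Or.inl ⟨h.1, hval.trans h.2⟩⟩, ⟨e, Or.inr ⟨h.1, hval.trans h.2⟩⟩]

theorem map_qPf_ne_last_add_two_nsmul (hv : IsAddValuationOnNonzero v) (hα : ∀ i, α i ≠ 0)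
    (hlast : v (α (Fin.last m)) < 0) (hind : IndepModTwo fun i => v (α i))
    (x : (Fin m → Bool) → F × F) (hx0 : (x fun _ => false).2 = 0)
    (hx : qPf F (Fin.init α) (α (Fin.last m)) x ≠ 0) (h : Γ) :
    v (qPf F (Fin.init α) (α (Fin.last m)) x) ≠ v (α (Fin.last m)) + 2 • h := by
  have hclass : v (α (Fin.last m)) =
      bitSum (fun i => v (α i)) (Fin.snoc (fun _ => false) true) := by
    simp [bitSum_snoc]
  rw [hclass]
  obtain ⟨e, ⟨hs, hval⟩ | ⟨ht, hval⟩⟩ := hv.exists_map_qPf_eq hα hlast hind x hx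
  · rw [hval, hv.map_mono_init_mul_sq hα e hs]
    exact hind.bitSum_add_two_nsmul_ne (fun hc => Bool.false_ne_true (Fin.snoc_injective2 hc).2) _ _
  · have he : e ≠ fun _ => false := by
      rintro rfl
      exact ht hx0
    rw [hval, hv.map_mono_init_mul_last_mul_sq hα e ht]
    exact hind.bitSum_add_two_nsmul_ne (fun hc => he (Fin.snoc_injective2 hc).1) _ _

theorem exists_pure_map_qPf_eq (hv : IsAddValuationOnNonzero v) (hα : ∀ i, α i ≠ 0)
    (hlast : v (α (Fin.last m)) < 0) (hind : IndepModTwo fun i => v (α i))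
    (x : (Fin m → Bool) → F × F) (hx : qPf F (Fin.init α) (α (Fin.last m)) x ≠ 0)
    (hxa : ∀ h : Γ, v (qPf F (Fin.init α) (α (Fin.last m)) x) ≠ v (α (Fin.last m)) + 2 • h) :
    ∃ y : (Fin m → Bool) → F × F, (y fun _ => false).2 = 0 ∧
      qPf F (Fin.init α) (α (Fin.last m)) y ≠ 0 ∧
        v (qPf F (Fin.init α) (α (Fin.last m)) y) = v (qPf F (Fin.init α) (α (Fin.last m)) x) := by
  have hm := mono_ne_zero_s12 (β := Fin.init α) fun i => hα _
  obtain ⟨e, ⟨hs, hval⟩ | ⟨ht, hval⟩⟩ := hv.exists_map_qPf_eq hα hlast hind x hx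
  · refine ⟨Pi.single e ((x e).1, 0), ?_, ?_, ?_⟩
    · by_cases he : (fun _ => false) = e <;> simp [he]
    · rw [qPf_single, normForm_mk_zero]
      exact mul_ne_zero (hm e) (pow_ne_zero 2 hs)
    · rw [qPf_single, normForm_mk_zero, hval]
  · have he : (fun _ => false) ≠ e := by
      rintro rfl
      refine hxa (v (x fun _ => false).2) ?_
      rw [hval, hv.map_mono_init_mul_last_mul_sq hα _ ht]
      simp [bitSum_snoc]
    refine ⟨Pi.single e (0, (x e).2), by simp [he], ?_, ?_⟩
    · rw [qPf_single, normForm_zero_mk]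
      exact mul_ne_zero (hm e) (mul_ne_zero (hα _) (pow_ne_zero 2 ht))
    · rw [qPf_single, normForm_zero_mk, hval]

end IsAddValuationOnNonzero

theorem stmt_12_general (F Γ : Type*) [Field F]
    [AddCommGroup Γ] [LinearOrder Γ] [IsOrderedAddMonoid Γ] (v : F → Γ)
    (hmul : ∀ x y : F, x ≠ 0 → y ≠ 0 → v (x * y) = v x + v y)
    (hadd : ∀ x y : F, x ≠ 0 → y ≠ 0 → x + y ≠ 0 → min (v x) (v y) ≤ v (x + y))
    (n : ℕ) (hn : 1 ≤ n) (α : Fin n → F) (hα0 : ∀ i, α i ≠ 0)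
    (hneg : ∀ i, v (α i) < 0)
    (hind : ∀ c : Fin n → Bool, (∃ i, c i = true) →
      ∀ h : Γ, (∑ i, if c i then v (α i) else 0) ≠ 2 • h)
    (hfull : ∀ g : Γ, ∃ x : (Fin (n - 1) → Bool) → F × F,
      qPf F (front α) (qlast α) x ≠ 0 ∧
        ∃ h : Γ, g = v (qPf F (front α) (qlast α) x) + 2 • h) :
    (∀ x : (Fin (n - 1) → Bool) → F × F, (x fun _ => false).2 = 0 →
      qPf F (front α) (qlast α) x ≠ 0 →
        ∀ h : Γ, v (qPf F (front α) (qlast α) x) ≠ v (qlast α) + 2 • h) ∧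
    (∀ g : Γ, (∀ h : Γ, g ≠ v (qlast α) + 2 • h) →
      ∃ x : (Fin (n - 1) → Bool) → F × F, (x fun _ => false).2 = 0 ∧
        qPf F (front α) (qlast α) x ≠ 0 ∧
          ∃ h : Γ, g = v (qPf F (front α) (qlast α) x) + 2 • h) := by
  obtain ⟨m, rfl⟩ : ∃ m, n = m + 1 := ⟨n - 1, by omega⟩
  have hv : IsAddValuationOnNonzero v := ⟨hmul, hadd⟩
  have hlast : qlast α = α (Fin.last m) := dif_neg m.succ_ne_zero
  rw [hlast] at hfull ⊢
  refine ⟨hv.map_qPf_ne_last_add_two_nsmul hα0 (hneg _) hind, fun g hg => ?_⟩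
  obtain ⟨x, hx, h, rfl⟩ := hfull g
  obtain ⟨y, hy0, hy, hyx⟩ := hv.exists_pure_map_qPf_eq hα0 (hneg _) hind x hx
    fun h' hh => hg (h' + h) (by rw [smul_add, ← add_assoc]; exact congrArg (· + 2 • h) hh)
  exact ⟨y, hy0, hy, h, congrArg (· + 2 • h) hyx.symm⟩

/-- if moreover `v̄(D(φ)) = Γ/2Γ`, then the image under `v̄` of the
nonzero values of the pure part `φ'` (the restriction of `φ` to the vectors whose
`[1,αₙ]`-block has second coordinate zero) is exactly `Γ/2Γ ∖ {v̄(αₙ)}`. -/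
theorem stmt_12 (F Γ : Type*) [Field F] [CharP F 2]
    [AddCommGroup Γ] [LinearOrder Γ] [IsOrderedAddMonoid Γ] (v : F → Γ)
    (hmul : ∀ x y : F, x ≠ 0 → y ≠ 0 → v (x * y) = v x + v y)
    (hadd : ∀ x y : F, x ≠ 0 → y ≠ 0 → x + y ≠ 0 → min (v x) (v y) ≤ v (x + y))
    (hsurj : ∀ g : Γ, ∃ x : F, x ≠ 0 ∧ v x = g)
    (n : ℕ) (hn : 1 ≤ n) (α : Fin n → F) (hα0 : ∀ i, α i ≠ 0)
    (hneg : ∀ i, v (α i) < 0)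
    (hind : ∀ c : Fin n → Bool, (∃ i, c i = true) →
      ∀ h : Γ, (∑ i, if c i then v (α i) else 0) ≠ 2 • h)
    (hfull : ∀ g : Γ, ∃ x : (Fin (n - 1) → Bool) → F × F,
      qPf F (front α) (qlast α) x ≠ 0 ∧
        ∃ h : Γ, g = v (qPf F (front α) (qlast α) x) + 2 • h) :
    (∀ x : (Fin (n - 1) → Bool) → F × F, (x fun _ => false).2 = 0 →
      qPf F (front α) (qlast α) x ≠ 0 →
        ∀ h : Γ, v (qPf F (front α) (qlast α) x) ≠ v (qlast α) + 2 • h) ∧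
    (∀ g : Γ, (∀ h : Γ, g ≠ v (qlast α) + 2 • h) →
      ∃ x : (Fin (n - 1) → Bool) → F × F, (x fun _ => false).2 = 0 ∧
        qPf F (front α) (qlast α) x ≠ 0 ∧
          ∃ h : Γ, g = v (qPf F (front α) (qlast α) x) + 2 • h) :=
  stmt_12_general F Γ v hmul hadd n hn α hα0 hneg hind hfull
end
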